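/- In Robin Hood hashing with lookahead, if the extended ordering invariant holds and A[h(v)].val <_{h(v)} v, then v is not logically in A; if moreover A[h(v)−1].next ≠ v, then v is not even physically in A. -/
import Mathlib


/-- The rank of `v` at cell `i`: the cyclic distance `(i - h v) mod m`. -/
def rnk {U : Type*} {m : ℕ} (h : U → Fin m) (v : U) (i : Fin m) : ℕ :=
  ((i : ℕ) + m - (h v : ℕ)) % m

/-- Cyclic distance from `a` to `b`, going forward, modulo `m`. -/
def cdist {m : ℕ} (a b : Fin m) : ℕ :=
  ((b : ℕ) + m - (a : ℕ)) % m

/-- Robin Hood priority: `a >_i b` iff `rank(a,i) > rank(b,i)`, or equal ranks and `a > b`. -/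
def prioGT {U : Type*} [LinearOrder U] {m : ℕ} (h : U → Fin m) (i : Fin m) (a b : U) : Prop :=
  rnk h a i > rnk h b i ∨ (rnk h a i = rnk h b i ∧ a > b)

/-- Priority extended to `Option U`: `none` is strictly below every `some v`. -/
def oGT {U : Type*} [LinearOrder U] {m : ℕ} (h : U → Fin m) (i : Fin m) :
    Option U → Option U → Prop
  | some a, some b => prioGT h i a b
  | some _, none => True
  | none, _ => False

/-- `x ≥_i y` : strictly higher priority, or equal. -/
def oGE {U : Type*} [LinearOrder U] {m : ℕ} (h : U → Fin m) (i : Fin m)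
    (x y : Option U) : Prop :=
  oGT h i x y ∨ x = y

/-- The Robin Hood ordering invariant: if `v` is stored at cell `i`, then every cell `j`
on the cyclic interval from `h v` to `i` (exclusive of `i`) stores a value of priority
at least that of `v` at cell `j`. -/
def OrdInv {U : Type*} [LinearOrder U] {m : ℕ} (h : U → Fin m) (A : Fin m → Option U) : Prop :=
  ∀ i v, A i = some v → ∀ j, cdist (h v) j < cdist (h v) i → oGE h j (A j) (some v)

/-- Cell marks: stable, insert in progress, delete in progress. -/
inductive Mark
  | S | I | D
deriving DecidableEq

/-- A table cell: (value slot, lookahead slot, mark). -/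
abbrev Cell (U : Type*) := Option U × Option U × Mark

/-- The extended ordering invariant for a table with lookahead. -/
def ExtInv {U : Type*} [LinearOrder U] {m : ℕ} [NeZero m] (h : U → Fin m)
    (A : Fin m → Cell U) : Prop :=
  -- (a) ordering invariant for the value slots
  (∀ i v, (A i).1 = some v → ∀ j, cdist (h v) j < cdist (h v) i →
    oGE h j ((A j).1) (some v)) ∧
  -- (b) A[i].next ≥_{i+1} A[i+1].val, or h(A[i].next) = i+1
  (∀ i : Fin m, oGE h (i + 1) ((A i).2.1) ((A (i + 1)).1) ∨
    (∃ w, (A i).2.1 = some w ∧ h w = i + 1)) ∧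
  -- (c) A[i].val ≥_i A[i].next, or (h(A[i].next) = i+1 and A[i].next ≥_{i+1} A[i+1].val)
  (∀ i : Fin m, oGE h i ((A i).1) ((A i).2.1) ∨
    ((∃ w, (A i).2.1 = some w ∧ h w = i + 1) ∧
      oGE h (i + 1) ((A i).2.1) ((A (i + 1)).1)))

/-- The (relevant part of the) stability invariant: a stable cell's lookahead slot
agrees with the value slot of the next cell. -/
def StableInv {U : Type*} {m : ℕ} [NeZero m] (A : Fin m → Cell U) : Prop :=
  ∀ i : Fin m, (A i).2.2 = Mark.S → (A i).2.1 = (A (i + 1)).1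

/-- `v` is physically in the table: some cell's value or lookahead slot equals `v`. -/
def physIn {U : Type*} {m : ℕ} (A : Fin m → Cell U) (v : U) : Prop :=
  ∃ i : Fin m, (A i).1 = some v ∨ (A i).2.1 = some v

/-- `v` is logically in the table. -/
def logIn {U : Type*} [LinearOrder U] {m : ℕ} (h : U → Fin m)
    (A : Fin m → Cell U) (v : U) : Prop :=
  ∃ i : Fin m, (A i).1 = some v ∨
    ((A i).2.1 = some v ∧ oGE h i ((A i).1) (some v))

section Aux
variable {U : Type*} [LinearOrder U] {m : ℕ}

lemma cdist_eq [NeZero m] (a b : Fin m) :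
    cdist a b = if (a : ℕ) ≤ (b : ℕ) then (b : ℕ) - a else (b : ℕ) + m - a := by
  have ha := a.isLt; have hb := b.isLt
  unfold cdist
  split
  · next hle =>
    have h1 : (b : ℕ) + m - a = ((b : ℕ) - a) + m := by omega
    rw [h1, Nat.add_mod_right, Nat.mod_eq_of_lt (by omega)]
  · next h2 =>
    rw [Nat.mod_eq_of_lt (by omega)]

lemma rnk_eq_cdist (h : U → Fin m) (v : U) (i : Fin m) : rnk h v i = cdist (h v) i := rfl

lemma cdist_self [NeZero m] (a : Fin m) : cdist a a = 0 := by
  rw [cdist_eq]; simp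

lemma cdist_pos [NeZero m] {a b : Fin m} (hab : a ≠ b) : 0 < cdist a b := by
  have := Fin.val_ne_of_ne hab
  have ha := a.isLt; have hb := b.isLt
  rw [cdist_eq]; split <;> omega

lemma cdist_sub [NeZero m] {x y z : Fin m} (hle : cdist y z ≤ cdist x z) :
    cdist x y = cdist x z - cdist y z := by
  have hx := x.isLt; have hy := y.isLt; have hz := z.isLt
  simp only [cdist_eq] at hle ⊢
  split_ifs at hle ⊢ <;> omega

lemma prioGT_asymm {h : U → Fin m} {i : Fin m} {a b : U}
    (h1 : prioGT h i a b) (h2 : prioGT h i b a) : False := by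
  rcases h1 with h1 | ⟨h1, h1'⟩ <;> rcases h2 with h2 | ⟨h2, h2'⟩
  · omega
  · omega
  · omega
  · exact absurd h1' (not_lt.2 h2'.le)

lemma prioGT_trans {h : U → Fin m} {i : Fin m} {a b c : U}
    (h1 : prioGT h i a b) (h2 : prioGT h i b c) : prioGT h i a c := by
  rcases h1 with h1 | ⟨h1, h1'⟩ <;> rcases h2 with h2 | ⟨h2, h2'⟩
  · exact Or.inl (by omega)
  · exact Or.inl (by omega)
  · exact Or.inl (by omega)
  · exact Or.inr ⟨by omega, h2'.trans h1'⟩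

/-- Core lemma: if the ordering invariant (a) holds and `v` beats `A[h v].val`,
then no cell `i` can have `A[i].val ≥_i v`. -/
lemma key [NeZero m] (h : U → Fin m) (A : Fin m → Cell U)
    (ha : ∀ i v, (A i).1 = some v → ∀ j, cdist (h v) j < cdist (h v) i →
      oGE h j ((A j).1) (some v))
    (v : U) (hlt : oGT h (h v) (some v) ((A (h v)).1))
    (i : Fin m) (hge : oGE h i ((A i).1) (some v)) : False := by
  -- extract a value `a` at cell `i` with `a ≥_i v`
  obtain ⟨a, hia, hav⟩ : ∃ a, (A i).1 = some a ∧ (a = v ∨ prioGT h i a v) := by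
    rcases hge with hgt | heq
    · cases hAi : (A i).1 with
      | none => rw [hAi] at hgt; exact absurd hgt (by simp [oGT])
      | some a =>
        rw [hAi] at hgt
        exact ⟨a, rfl, Or.inr hgt⟩
    · exact ⟨v, heq, Or.inl rfl⟩
  have hrge : rnk h v i ≤ rnk h a i := by
    rcases hav with rfl | hgt
    · exact le_refl _
    · rcases hgt with hgt | ⟨heq, _⟩
      · exact hgt.le
      · exact heq.ge
  have hreq : rnk h a i = rnk h v i → v ≤ a := by
    intro heq
    rcases hav with rfl | hgt
    · exact le_refl _
    · rcases hgt with hgt | ⟨_, hgt'⟩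
      · omega
      · exact hgt'.le
  by_cases hieq : i = h v
  · -- directly contradict hlt at cell h v
    rw [hieq] at hia
    rw [hia] at hlt
    have h0 : rnk h v (h v) = 0 := by rw [rnk_eq_cdist, cdist_self]
    rcases hlt with hlt | ⟨hlt, hlt'⟩
    · omega
    · have := hreq (by rw [hieq]; omega)
      exact absurd hlt' (not_lt.2 this)
  · -- use the ordering invariant to walk back to cell h v
    have hvipos : 0 < cdist (h v) i := cdist_pos (fun hh => hieq hh.symm)
    have hcd : cdist (h a) (h v) = cdist (h a) i - cdist (h v) i := by
      exact cdist_sub (by rw [← rnk_eq_cdist, ← rnk_eq_cdist]; exact hrge)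
    have hstep : cdist (h a) (h v) < cdist (h a) i := by
      have h1 : cdist (h v) i ≤ cdist (h a) i := by
        rw [← rnk_eq_cdist, ← rnk_eq_cdist]; exact hrge
      omega
    have hge2 : oGE h (h v) ((A (h v)).1) (some a) := ha i a hia (h v) hstep
    -- combine with hlt : v >_{h v} A[h v].val
    have hva : prioGT h (h v) v a := by
      rcases hge2 with hgt2 | heq2
      · cases hAh : (A (h v)).1 with
        | none => rw [hAh] at hgt2; exact absurd hgt2 (by simp [oGT])
        | some b =>
          rw [hAh] at hgt2 hlt
          exact prioGT_trans hlt hgt2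
      · rw [heq2] at hlt; exact hlt
    -- but rnk v (h v) = 0, so rnk a (h v) = 0 and v > a, forcing equal ranks at i
    have h0 : rnk h v (h v) = 0 := by rw [rnk_eq_cdist, cdist_self]
    rcases hva with hva | ⟨hva, hva'⟩
    · omega
    · have h2 : rnk h a (h v) = 0 := by omega
      rw [rnk_eq_cdist] at h2
      have h3 : rnk h a i = rnk h v i := by
        rw [rnk_eq_cdist, rnk_eq_cdist]
        have h4 : cdist (h v) i ≤ cdist (h a) i := by
          rw [← rnk_eq_cdist, ← rnk_eq_cdist]; exact hrge
        omega
      exact absurd hva' (not_lt.2 (hreq h3))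

end Aux

theorem stmt14 {U : Type*} [LinearOrder U] {m : ℕ} [NeZero m] (h : U → Fin m)
    (A : Fin m → Cell U) (hext : ExtInv h A)
    (v : U)
    -- A[h(v)].val <_{h(v)} v
    (hlt : oGT h (h v) (some v) ((A (h v)).1)) :
    ¬ logIn h A v ∧
    ((A (h v - 1)).2.1 ≠ some v → ¬ physIn A v) := by
  obtain ⟨ha, hb, hc⟩ := hext
  have hnlog : ¬ logIn h A v := by
    rintro ⟨i, hi | ⟨hn, hge⟩⟩
    · exact key h A ha v hlt i (by rw [hi]; exact Or.inr rfl)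
    · exact key h A ha v hlt i hge
  refine ⟨hnlog, ?_⟩
  rintro hne ⟨i, hi | hn⟩
  · exact key h A ha v hlt i (by rw [hi]; exact Or.inr rfl)
  · rcases hc i with hci | ⟨⟨w, hw, hw2⟩, _⟩
    · rw [hn] at hci
      exact hnlog ⟨i, Or.inr ⟨hn, hci⟩⟩
    · rw [hn] at hw
      injection hw with hw
      subst hw
      apply hne
      rw [hw2, add_sub_cancel_right]
      exact hn
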